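/- For any w ∈ ℝ^L and any ε > 0, argmax^ε(w) ⊆ s_margin^ε(w); that is, the inflated argmax set is always contained in the fixed-margin selection set. -/

import Mathlib

noncomputable section

/-- The set `R_j^ε = {w ∈ ℝ^L : w_j ≥ max_{ℓ≠j} w_ℓ + ε/√2}`. -/
def Rset (L : ℕ) (ε : ℝ) (j : Fin L) : Set (EuclideanSpace ℝ (Fin L)) :=
  {w | ∀ ℓ : Fin L, ℓ ≠ j → w ℓ + ε / Real.sqrt 2 ≤ w j}

/-- The inflated argmax: `argmax^ε(w) = {j ∈ [L] : dist(w, R_j^ε) < ε}`. -/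
def inflatedArgmax (L : ℕ) (ε : ℝ) (w : EuclideanSpace ℝ (Fin L)) : Set (Fin L) :=
  {j | Metric.infDist w (Rset L ε j) < ε}

/-- The fixed-margin selection rule
`s_margin^ε(w) = {j ∈ [L] : w_j > max_{ℓ∈[L]} w_ℓ − ε/√2}`. -/
def smargin (L : ℕ) (ε : ℝ) (w : EuclideanSpace ℝ (Fin L)) : Set (Fin L) :=
  {j | ∀ ℓ : Fin L, w ℓ - ε / Real.sqrt 2 < w j}

/-! A point of `R_j^ε` within distance `ε` of `w` moves the gap `w_ℓ - w_j` by at most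
`√2 · dist(w, v) < √2 ε`, and in `R_j^ε` that gap is at most `-ε/√2`; since
`√2 ε - ε/√2 = ε/√2`, every `w_ℓ` stays below `w_j + ε/√2`. -/

lemma EuclideanSpace.apply_sub_apply_le_sqrt_two_mul_norm {ι : Type*} [Fintype ι]
    (x : EuclideanSpace ℝ ι) {i j : ι} (hij : i ≠ j) : x i - x j ≤ √2 * ‖x‖ := by
  have hsq : (x i - x j) ^ 2 ≤ 2 * ‖x‖ ^ 2 := by
    have hpair : x i ^ 2 + x j ^ 2 ≤ ‖x‖ ^ 2 := by
      simpa [EuclideanSpace.norm_sq_eq] using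
        Finset.add_le_sum (f := fun k ↦ x k ^ 2) (fun k _ ↦ sq_nonneg (x k))
          (Finset.mem_univ i) (Finset.mem_univ j) hij
    nlinarith [sq_nonneg (x i + x j)]
  calc x i - x j ≤ |x i - x j| := le_abs_self _
    _ ≤ √(2 * ‖x‖ ^ 2) := Real.abs_le_sqrt hsq
    _ = √2 * ‖x‖ := by rw [Real.sqrt_mul zero_le_two, Real.sqrt_sq (norm_nonneg x)]

lemma Rset_nonempty (L : ℕ) (ε : ℝ) (j : Fin L) : (Rset L ε j).Nonempty :=
  ⟨EuclideanSpace.single j (ε / √2), fun ℓ hℓj ↦ by simp [hℓj]⟩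

lemma sqrt_two_mul_sub_div_sqrt_two (ε : ℝ) : √2 * ε - ε / √2 = ε / √2 := by
  field_simp
  rw [Real.sq_sqrt zero_le_two]
  ring

theorem inflatedArgmax_subset_smargin_general (L : ℕ) (ε : ℝ)
    (w : EuclideanSpace ℝ (Fin L)) :
    inflatedArgmax L ε w ⊆ smargin L ε w := by
  intro j hj ℓ
  have hε : 0 < ε := Metric.infDist_nonneg.trans_lt hj
  obtain ⟨v, hv, hwv⟩ := (Metric.infDist_lt_iff (Rset_nonempty L ε j)).1 hj
  rcases eq_or_ne ℓ j with rfl | hℓj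
  · linarith [div_pos hε (Real.sqrt_pos.2 zero_lt_two)]
  · have hgap : (w - v) ℓ - (w - v) j ≤ √2 * dist w v :=
      dist_eq_norm w v ▸ (w - v).apply_sub_apply_le_sqrt_two_mul_norm hℓj
    have hclose : √2 * dist w v < √2 * ε :=
      mul_lt_mul_of_pos_left hwv (Real.sqrt_pos.2 zero_lt_two)
    have hv_gap : v ℓ + ε / √2 ≤ v j := hv ℓ hℓj
    simp only [PiLp.sub_apply] at hgap
    linarith [sqrt_two_mul_sub_div_sqrt_two ε]

/-- The inflated argmax set is always contained in the fixed-margin selection set. -/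
theorem inflatedArgmax_subset_smargin (L : ℕ) (hL : 2 ≤ L) (ε : ℝ) (hε : 0 < ε)
    (w : EuclideanSpace ℝ (Fin L)) :
    inflatedArgmax L ε w ⊆ smargin L ε w :=
  inflatedArgmax_subset_smargin_general L ε w
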